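/- arXiv:1512.00135 — 5 statements merged into one kernel-verified Lean document; each statement's English description precedes it below -/
import Mathlib

section
/- Let p = (p_0, p_1, p_2) and q = (q_0, q_1, q_2) be probability distributions on {0,1,2} with p_0 ≥ p_1 ≥ p_2 and q_0 ≥ q_1 ≥ q_2, and suppose they have equal Shannon entropies H(p) = H(q). If p_0 ≤ q_0, then ‖p − U‖_2 ≤ ‖q − U‖_2, where U = (1/3, 1/3, 1/3) is the uniform distribution. (In other words, along the entropy circle H(p) = t, restricted to sorted distributions, the Euclidean distance to the uniform distribution is an increasing function of the largest probability p_0.) -/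
/-!
As the coordinates sum to `1`, it suffices to show `∑ pᵢ² ≤ ∑ qᵢ²`. If `q₂ ≤ p₂` then `q`
majorizes `p` and this is elementary. Otherwise go from `p` to `q` by two transfers of mass:
`a = q₀ - p₀` from `p₁` to `p₀`, reaching `(q₀, m, p₂)` with `m = p₁ - a = q₁ + c`, and then
`c = q₂ - p₂` from `m` to `p₂`. Moving `t` from `y` to `x ≥ y` raises `x² + y²` by
`2 t (x - y + t)`, and since `Y (log X - log Y) ≤ X - Y ≤ X (log X - log Y)`, the entropy it
destroys lies between `t (x - y + t) / (x + t)` and `t (x - y + t) / (y - t)`. For the two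
transfers the relevant denominators are both `m`, so equal entropies force the gain in `∑ xᵢ²`
of the first transfer to dominate the loss of the second.
-/

open Real Set

lemma mul_log_sub_log_le_sub {x y : ℝ} (hx : 0 < x) (hy : 0 < y) :
    y * (log x - log y) ≤ x - y := by
  have h := log_le_sub_one_of_pos (div_pos hx hy)
  rw [log_div hx.ne' hy.ne', le_sub_iff_add_le, le_div_iff₀ hy] at h
  linarith

lemma sub_le_mul_log_sub_log {x y : ℝ} (hx : 0 < x) (hy : 0 < y) :
    x - y ≤ x * (log x - log y) := by
  linarith [mul_log_sub_log_le_sub hy hx]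

noncomputable def entropyDrop (x y t : ℝ) : ℝ :=
  negMulLog x + negMulLog y - negMulLog (x + t) - negMulLog (y - t)

lemma entropyDrop_zero (x y : ℝ) : entropyDrop x y 0 = 0 := by
  simp [entropyDrop]

@[fun_prop]
lemma continuous_entropyDrop (x y : ℝ) : Continuous (entropyDrop x y) := by
  unfold entropyDrop
  fun_prop

lemma hasDerivAt_entropyDrop {x y s : ℝ} (hx : 0 < x + s) (hy : 0 < y - s) :
    HasDerivAt (entropyDrop x y) (log (x + s) - log (y - s)) s := by
  have hX := (hasDerivAt_negMulLog hx.ne').comp s ((hasDerivAt_id s).const_add x)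
  have hY := (hasDerivAt_negMulLog hy.ne').comp s ((hasDerivAt_id s).const_sub y)
  exact ((hX.const_sub (negMulLog x + negMulLog y)).sub hY).congr_deriv (by ring)

lemma hasDerivAt_mul_sub_add (x y s : ℝ) :
    HasDerivAt (fun s => s * (x - y + s)) (x - y + 2 * s) s :=
  ((hasDerivAt_id s).mul ((hasDerivAt_id s).const_add (x - y))).congr_deriv (by simp; ring)

section Transfer

variable {x y t : ℝ}

lemma sub_pos_add_pos_log_nonneg_of_mem_Ico (hty : t ≤ y) (hyx : y ≤ x) {s : ℝ}
    (hs : s ∈ Ico 0 t) :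
    0 < y - s ∧ 0 < x + s ∧ 0 ≤ log (x + s) - log (y - s) := by
  obtain ⟨hs0, hst⟩ := hs
  have hys : 0 < y - s := by linarith
  exact ⟨hys, by linarith, sub_nonneg.2 (log_le_log hys (by linarith))⟩

lemma mul_entropyDrop_le (ht : 0 ≤ t) (hty : t ≤ y) (hyx : y ≤ x) :
    (y - t) * entropyDrop x y t ≤ t * (x - y + t) := by
  refine image_le_of_deriv_right_le_deriv_boundary (a := 0)
    (f := fun s => (y - t) * entropyDrop x y s) (B := fun s => s * (x - y + s))
    (f' := fun s => (y - t) * (log (x + s) - log (y - s))) (B' := fun s => x - y + 2 * s)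
    (by fun_prop) (fun s hs => ?_) (by simp [entropyDrop_zero]) (by fun_prop)
    (fun s _ => (hasDerivAt_mul_sub_add x y s).hasDerivWithinAt) (fun s hs => ?_) ⟨ht, le_rfl⟩
  · obtain ⟨hys, hxs, -⟩ := sub_pos_add_pos_log_nonneg_of_mem_Ico hty hyx hs
    exact ((hasDerivAt_entropyDrop hxs hys).const_mul _).hasDerivWithinAt
  · obtain ⟨hys, hxs, hlog⟩ := sub_pos_add_pos_log_nonneg_of_mem_Ico hty hyx hs
    calc (y - t) * (log (x + s) - log (y - s))
        ≤ (y - s) * (log (x + s) - log (y - s)) := by gcongr; exact hs.2.le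
      _ ≤ (x + s) - (y - s) := mul_log_sub_log_le_sub hxs hys
      _ = x - y + 2 * s := by ring

lemma le_mul_entropyDrop (ht : 0 ≤ t) (hty : t ≤ y) (hyx : y ≤ x) :
    t * (x - y + t) ≤ (x + t) * entropyDrop x y t := by
  refine image_le_of_deriv_right_le_deriv_boundary (a := 0)
    (f := fun s => s * (x - y + s)) (B := fun s => (x + t) * entropyDrop x y s)
    (f' := fun s => x - y + 2 * s) (B' := fun s => (x + t) * (log (x + s) - log (y - s)))
    (by fun_prop) (fun s _ => (hasDerivAt_mul_sub_add x y s).hasDerivWithinAt)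
    (by simp [entropyDrop_zero]) (by fun_prop) (fun s hs => ?_) (fun s hs => ?_) ⟨ht, le_rfl⟩
  · obtain ⟨hys, hxs, -⟩ := sub_pos_add_pos_log_nonneg_of_mem_Ico hty hyx hs
    exact ((hasDerivAt_entropyDrop hxs hys).const_mul _).hasDerivWithinAt
  · obtain ⟨hys, hxs, hlog⟩ := sub_pos_add_pos_log_nonneg_of_mem_Ico hty hyx hs
    calc x - y + 2 * s = (x + s) - (y - s) := by ring
      _ ≤ (x + s) * (log (x + s) - log (y - s)) := sub_le_mul_log_sub_log hxs hys
      _ ≤ (x + t) * (log (x + s) - log (y - s)) := by gcongr; exact hs.2.le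

end Transfer

section ThreePoint

variable {p₀ p₁ p₂ q₀ q₁ q₂ : ℝ}

lemma sq_add_sq_add_sq_le_of_majorizes (hp₀₁ : p₁ ≤ p₀) (hp₁₂ : p₂ ≤ p₁) (h₀ : p₀ ≤ q₀)
    (h₂ : q₂ ≤ p₂) (hsum : p₀ + p₁ + p₂ = q₀ + q₁ + q₂) :
    p₀ ^ 2 + p₁ ^ 2 + p₂ ^ 2 ≤ q₀ ^ 2 + q₁ ^ 2 + q₂ ^ 2 := by
  have hq₁ : q₁ = p₁ - (q₀ - p₀) + (p₂ - q₂) := by linarith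
  subst hq₁
  nlinarith [mul_nonneg (sub_nonneg.2 h₀) (sub_nonneg.2 hp₀₁),
    mul_nonneg (sub_nonneg.2 h₂) (sub_nonneg.2 hp₁₂),
    sq_nonneg (q₀ - p₀), sq_nonneg (p₂ - q₂), sq_nonneg (q₀ - p₀ - (p₂ - q₂))]

lemma sq_add_sq_add_sq_le_of_negMulLog_eq (hp₂ : 0 ≤ p₂) (hp₀₁ : p₁ ≤ p₀) (hp₁₂ : p₂ ≤ p₁)
    (hq₁₂ : q₂ ≤ q₁) (hsum : p₀ + p₁ + p₂ = q₀ + q₁ + q₂)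
    (hent : negMulLog p₀ + negMulLog p₁ + negMulLog p₂
      = negMulLog q₀ + negMulLog q₁ + negMulLog q₂)
    (hle : p₀ ≤ q₀) :
    p₀ ^ 2 + p₁ ^ 2 + p₂ ^ 2 ≤ q₀ ^ 2 + q₁ ^ 2 + q₂ ^ 2 := by
  rcases le_or_gt q₂ p₂ with h₂ | h₂
  · exact sq_add_sq_add_sq_le_of_majorizes hp₀₁ hp₁₂ hle h₂ hsum
  have hmid : p₁ - (q₀ - p₀) = q₁ + (q₂ - p₂) := by linarith
  have hdrop₁ := mul_entropyDrop_le (t := q₀ - p₀) (by linarith) (by linarith) hp₀₁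
  have hdrop₂ := le_mul_entropyDrop (t := q₂ - p₂) (by linarith) (by linarith) hq₁₂
  have hdrop : entropyDrop p₀ p₁ (q₀ - p₀) = entropyDrop q₁ q₂ (q₂ - p₂) := by
    simp only [entropyDrop, hmid, add_sub_cancel, sub_sub_cancel]
    linarith
  rw [hmid, hdrop] at hdrop₁
  have hquad := hdrop₂.trans hdrop₁
  obtain rfl : q₁ = p₀ + p₁ + p₂ - q₀ - q₂ := by linarith
  linear_combination 2 * hquad

end ThreePoint

theorem sorted_entropy_circle_dist_mono_general
    (p q : Fin 3 → ℝ)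
    (hp_nonneg : ∀ i, 0 ≤ p i) (hp_sum : ∑ i, p i = 1)
    (hq_sum : ∑ i, q i = 1)
    (hp_sorted : p 1 ≤ p 0 ∧ p 2 ≤ p 1)
    (hq_sorted : q 1 ≤ q 0 ∧ q 2 ≤ q 1)
    (hent : ∑ i, Real.negMulLog (p i) = ∑ i, Real.negMulLog (q i))
    (hle : p 0 ≤ q 0) :
    Real.sqrt (∑ i, (p i - 1/3) ^ 2) ≤ Real.sqrt (∑ i, (q i - 1/3) ^ 2) := by
  simp only [Fin.sum_univ_three] at hp_sum hq_sum hent ⊢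
  have hsq := sq_add_sq_add_sq_le_of_negMulLog_eq (hp_nonneg 2) hp_sorted.1 hp_sorted.2
    hq_sorted.2 (hp_sum.trans hq_sum.symm) hent hle
  apply sqrt_le_sqrt
  linear_combination hsq - (2 / 3) * hp_sum + (2 / 3) * hq_sum

/-- On the entropy circle `H(p) = t` in the simplex of probability
distributions on a three-element set, restricted to sorted distributions
`p₀ ≥ p₁ ≥ p₂`, the Euclidean distance to the uniform distribution `U = (1/3,1/3,1/3)`
is an increasing function of the largest probability `p₀`. -/
theorem sorted_entropy_circle_dist_mono
    (p q : Fin 3 → ℝ)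
    (hp_nonneg : ∀ i, 0 ≤ p i) (hp_sum : ∑ i, p i = 1)
    (hq_nonneg : ∀ i, 0 ≤ q i) (hq_sum : ∑ i, q i = 1)
    (hp_sorted : p 1 ≤ p 0 ∧ p 2 ≤ p 1)
    (hq_sorted : q 1 ≤ q 0 ∧ q 2 ≤ q 1)
    (hent : ∑ i, Real.negMulLog (p i) = ∑ i, Real.negMulLog (q i))
    (hle : p 0 ≤ q 0) :
    Real.sqrt (∑ i, (p i - 1/3) ^ 2) ≤ Real.sqrt (∑ i, (q i - 1/3) ^ 2) :=
  sorted_entropy_circle_dist_mono_general p q hp_nonneg hp_sum hq_sum hp_sorted hq_sorted hent hle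
end

section
/- Let X and Y be independent, identically distributed random variables taking values in the cyclic group ℤ/3ℤ. Then H(X+Y) ≤ H(X−Y). -/
/-!
If `X` has law `(u, v, w)`, then `X + Y` has law `(u² + 2vw, v² + 2wu, w² + 2uv)` and `X - Y` has
law `(s, e, e)` with `s = u² + v² + w²`, `e = uv + vw + wu`. Both are of the form `s - c`:
`X + Y` for `a = ((v - w)², (w - u)², (u - v)²)`, `X - Y` for `b = (0, s - e, s - e)`, and
`∑ a = ∑ b`, `∏ (σ - aᵢ) ≤ ∏ (σ - bⱼ)`. With `φ x = -x log x`, the function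
`Ψ σ = ∑ φ (σ - bⱼ) - ∑ φ (σ - aᵢ)` has derivative `∑ log (σ - aᵢ) - ∑ log (σ - bⱼ) ≤ 0`
for `σ ≥ s`, and since `φ (σ - c) = φ σ + c log σ + c + o(1)` it tends to `∑ b - ∑ a = 0`.
Hence `Ψ s ≥ 0`.
-/

open MeasureTheory ProbabilityTheory

/-- Shannon entropy (in nats) of a discrete random variable `X` on the
probability space `(Ω, P)`: `H(X) = -∑ₛ P(X = s) log P(X = s)`. -/
noncomputable def shEnt {Ω S : Type*} [MeasurableSpace Ω] (P : Measure Ω) (X : Ω → S) : ℝ :=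
  ∑' s : S, Real.negMulLog (P (X ⁻¹' {s})).toReal

open Filter Topology Real

theorem tendsto_negMulLog_sub_sub_negMulLog_sub_mul_log (k : ℝ) :
    Tendsto (fun σ ↦ negMulLog (σ - k) - negMulLog σ - k * log σ) atTop (𝓝 k) := by
  have hfactor : Tendsto (fun σ : ℝ ↦ 1 + -k / σ) atTop (𝓝 1) := by
    simpa using (tendsto_const_nhds (x := -k)).div_atTop tendsto_id |>.const_add 1
  have hlim := hfactor.mul (tendsto_mul_log_one_add_div_atTop (-k)).neg
  rw [one_mul, neg_neg] at hlim
  refine hlim.congr' ?_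
  filter_upwards [eventually_gt_atTop (max k 0)] with σ hσ
  obtain ⟨hkσ, hσ⟩ := max_lt_iff.1 hσ
  rw [show 1 + -k / σ = (σ - k) / σ by field_simp; ring,
    log_div (sub_pos.2 hkσ).ne' hσ.ne', negMulLog, negMulLog]
  field_simp
  ring

theorem hasDerivAt_negMulLog_sub {k σ : ℝ} (h : k < σ) :
    HasDerivAt (fun x ↦ negMulLog (x - k)) (-log (σ - k) - 1) σ :=
  (hasDerivAt_negMulLog (sub_pos.2 h).ne').comp_sub_const σ k

theorem sum_negMulLog_sub_le_of_prod_sub_le {ι κ : Type*} [Fintype ι] [Fintype κ]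
    {a : ι → ℝ} {b : κ → ℝ} {s : ℝ} (ha : ∀ i, a i ≤ s) (hb : ∀ j, b j ≤ s)
    (hcard : Fintype.card ι = Fintype.card κ) (hsum : ∑ i, a i = ∑ j, b j)
    (hprod : ∀ σ, s < σ → ∏ i, (σ - a i) ≤ ∏ j, (σ - b j)) :
    ∑ i, negMulLog (s - a i) ≤ ∑ j, negMulLog (s - b j) := by
  set Ψ : ℝ → ℝ := fun σ ↦ ∑ j, negMulLog (σ - b j) - ∑ i, negMulLog (σ - a i) with hΨ
  suffices 0 ≤ Ψ s by simpa [hΨ] using this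
  have hderiv : ∀ σ, s < σ →
      HasDerivAt Ψ (∑ i, log (σ - a i) - ∑ j, log (σ - b j)) σ := by
    intro σ hσ
    refine ((HasDerivAt.fun_sum (u := Finset.univ) fun j _ ↦
        hasDerivAt_negMulLog_sub ((hb j).trans_lt hσ)).fun_sub
      (HasDerivAt.fun_sum (u := Finset.univ) fun i _ ↦
        hasDerivAt_negMulLog_sub ((ha i).trans_lt hσ))).congr_deriv ?_
    simp only [Finset.sum_sub_distrib, Finset.sum_neg_distrib, Finset.sum_const,
      Finset.card_univ, hcard]
    ring
  have hanti : AntitoneOn Ψ (Set.Ici s) := by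
    refine antitoneOn_of_hasDerivWithinAt_nonpos (convex_Ici s) ?_
      (fun σ hσ ↦ (hderiv σ (by simpa using hσ)).hasDerivWithinAt) fun σ hσ ↦ ?_
    · exact Continuous.continuousOn (by fun_prop)
    · rw [interior_Ici, Set.mem_Ioi] at hσ
      have hpos : ∀ {c}, c ≤ s → σ - c ≠ 0 := fun hc ↦ (sub_pos.2 (hc.trans_lt hσ)).ne'
      rw [sub_nonpos, ← log_prod fun i _ ↦ hpos (ha i), ← log_prod fun j _ ↦ hpos (hb j)]
      exact log_le_log (Finset.prod_pos fun i _ ↦ sub_pos.2 ((ha i).trans_lt hσ)) (hprod σ hσ)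
  have hlim : Tendsto Ψ atTop (𝓝 0) := by
    have key := (tendsto_finsetSum Finset.univ fun j _ ↦
        tendsto_negMulLog_sub_sub_negMulLog_sub_mul_log (b j)).sub
      (tendsto_finsetSum Finset.univ fun i _ ↦
        tendsto_negMulLog_sub_sub_negMulLog_sub_mul_log (a i))
    rw [hsum, sub_self] at key
    refine key.congr fun σ ↦ ?_
    simp only [hΨ, Finset.sum_sub_distrib, Finset.sum_const, Finset.card_univ, hcard,
      ← Finset.sum_mul, hsum]
    ring
  exact le_of_tendsto hlim <| eventually_atTop.2
    ⟨s, fun σ hσ ↦ hanti Set.self_mem_Ici hσ hσ⟩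

theorem negMulLog_add_negMulLog_add_negMulLog_le {u v w : ℝ} (hu : 0 ≤ u) (hv : 0 ≤ v)
    (hw : 0 ≤ w) :
    negMulLog (u ^ 2 + 2 * v * w) + negMulLog (v ^ 2 + 2 * w * u)
        + negMulLog (w ^ 2 + 2 * u * v)
      ≤ negMulLog (u ^ 2 + v ^ 2 + w ^ 2) + 2 * negMulLog (u * v + v * w + w * u) := by
  have hvw := mul_nonneg hv hw
  have hwu := mul_nonneg hw hu
  have huv := mul_nonneg hu hv
  have key := sum_negMulLog_sub_le_of_prod_sub_le (s := u ^ 2 + v ^ 2 + w ^ 2)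
    (a := ![(v - w) ^ 2, (w - u) ^ 2, (u - v) ^ 2])
    (b := ![0, (u ^ 2 + v ^ 2 + w ^ 2) - (u * v + v * w + w * u),
      (u ^ 2 + v ^ 2 + w ^ 2) - (u * v + v * w + w * u)])
    (fun i ↦ by
      fin_cases i <;> simp only [Fin.zero_eta, Fin.mk_one, Fin.reduceFinMk, Matrix.cons_val] <;>
        nlinarith)
    (fun j ↦ by
      fin_cases j <;> simp only [Fin.zero_eta, Fin.mk_one, Fin.reduceFinMk, Matrix.cons_val] <;>
        nlinarith)
    rfl (by simp only [Fin.sum_univ_three, Matrix.cons_val]; ring)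
    -- the two cubics differ by the constant `((u - v) (v - w) (w - u))²`
    (fun σ _ ↦ by
      simp only [Fin.prod_univ_three, Matrix.cons_val, sub_zero]
      nlinarith [sq_nonneg ((u - v) * (v - w) * (w - u))])
  simp only [Fin.sum_univ_three, Matrix.cons_val] at key
  rw [sub_zero, sub_sub_cancel,
    show u ^ 2 + v ^ 2 + w ^ 2 - (v - w) ^ 2 = u ^ 2 + 2 * v * w by ring,
    show u ^ 2 + v ^ 2 + w ^ 2 - (w - u) ^ 2 = v ^ 2 + 2 * w * u by ring,
    show u ^ 2 + v ^ 2 + w ^ 2 - (u - v) ^ 2 = w ^ 2 + 2 * u * v by ring] at key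
  linarith

theorem ZMod.sum_negMulLog_sum_mul_sub_le (p : ZMod 3 → ℝ) (hp : ∀ i, 0 ≤ p i) :
    ∑ k, negMulLog (∑ i, p i * p (k - i)) ≤ ∑ k, negMulLog (∑ i, p i * p (i - k)) := by
  have h := negMulLog_add_negMulLog_add_negMulLog_le (hp 0) (hp 1) (hp 2)
  have hsum3 : ∀ f : ZMod 3 → ℝ, ∑ i, f i = f 0 + f 1 + f 2 := fun f ↦ Fin.sum_univ_three f
  simp only [hsum3, sub_self, sub_zero, zero_sub, show (-1 : ZMod 3) = 2 from rfl,
    show (-2 : ZMod 3) = 1 from rfl, show (1 - 2 : ZMod 3) = 2 from rfl,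
    show (2 - 1 : ZMod 3) = 1 from rfl]
  ring_nf at h ⊢
  linarith

namespace ProbabilityTheory

variable {Ω : Type*} [MeasurableSpace Ω] {P : Measure Ω} [IsFiniteMeasure P]

theorem IndepFun.measureReal_mem_eq_sum {S T : Type*} [Fintype S] [MeasurableSpace S]
    [MeasurableSingletonClass S] [MeasurableSpace T] {X : Ω → S} {Y : Ω → T}
    (hXY : IndepFun X Y P) (hX : Measurable X) (hY : Measurable Y) {A : S → Set T}
    (hA : ∀ i, MeasurableSet (A i)) :
    P.real {ω | Y ω ∈ A (X ω)} = ∑ i, P.real (X ⁻¹' {i}) * P.real (Y ⁻¹' A i) := by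
  have hunion : {ω | Y ω ∈ A (X ω)} = ⋃ i, X ⁻¹' {i} ∩ Y ⁻¹' A i := by
    ext ω
    simp
  rw [hunion, measureReal_iUnion_fintype]
  · simp only [measureReal_def, ENNReal.toReal_mul,
      hXY.measure_inter_preimage_eq_mul _ _ (measurableSet_singleton _) (hA _)]
  · intro i j hij
    exact Disjoint.mono Set.inter_subset_left Set.inter_subset_left
      ((Set.disjoint_singleton.2 hij).preimage X)
  · exact fun i ↦ (hX (measurableSet_singleton i)).inter (hY (hA i))

variable {G : Type*} [AddCommGroup G] [Fintype G] [MeasurableSpace G]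
  [MeasurableSingletonClass G] {X Y : Ω → G}

theorem IndepFun.measureReal_add_preimage_singleton (hXY : IndepFun X Y P) (hX : Measurable X)
    (hY : Measurable Y) (k : G) :
    P.real ((fun ω ↦ X ω + Y ω) ⁻¹' {k}) =
      ∑ i, P.real (X ⁻¹' {i}) * P.real (Y ⁻¹' {k - i}) := by
  rw [← hXY.measureReal_mem_eq_sum hX hY fun _ ↦ measurableSet_singleton _]
  congr 1
  ext ω
  simp [eq_sub_iff_add_eq']

theorem IndepFun.measureReal_sub_preimage_singleton (hXY : IndepFun X Y P) (hX : Measurable X)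
    (hY : Measurable Y) (k : G) :
    P.real ((fun ω ↦ X ω - Y ω) ⁻¹' {k}) =
      ∑ i, P.real (X ⁻¹' {i}) * P.real (Y ⁻¹' {i - k}) := by
  rw [← hXY.measureReal_mem_eq_sum hX hY fun _ ↦ measurableSet_singleton _]
  congr 1
  ext ω
  simpa [eq_sub_iff_add_eq, sub_eq_iff_eq_add'] using eq_comm

end ProbabilityTheory

/-- For i.i.d. random variables `X, Y` taking values in `ℤ/3ℤ`,
`H(X+Y) ≤ H(X-Y)`. -/
theorem entropy_add_le_entropy_sub_zmod3
    {Ω : Type*} [MeasurableSpace Ω] (P : Measure Ω) [IsProbabilityMeasure P]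
    (X Y : Ω → ZMod 3) (hX : Measurable X) (hY : Measurable Y)
    (hindep : IndepFun X Y P) (hid : IdentDistrib X Y P P) :
    shEnt P (fun ω => X ω + Y ω) ≤ shEnt P (fun ω => X ω - Y ω) := by
  set p : ZMod 3 → ℝ := fun i ↦ P.real (X ⁻¹' {i})
  have hYX : ∀ j, P.real (Y ⁻¹' {j}) = p j := fun j ↦
    (congrArg ENNReal.toReal (hid.measure_mem_eq (measurableSet_singleton j))).symm
  have hent : ∀ Z : Ω → ZMod 3, shEnt P Z = ∑ k, negMulLog (P.real (Z ⁻¹' {k})) :=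
    fun _ ↦ tsum_fintype _
  rw [hent, hent]
  simp only [hindep.measureReal_add_preimage_singleton hX hY,
    hindep.measureReal_sub_preimage_singleton hX hY, hYX]
  exact ZMod.sum_negMulLog_sum_mul_sub_le p fun _ ↦ measureReal_nonneg
end

section
/- Let μ be a probability distribution on the field 𝔽_3 = ℤ/3ℤ and let U_1, U_2 be i.i.d. random variables with distribution μ. Then for every λ ∈ 𝔽_3, H(U_1 + 2·U_2) ≥ H(U_1 + λ·U_2); that is, λ = 2 maximizes H(U_1 + λ U_2) over λ ∈ 𝔽_3. Moreover, if μ(1) = μ(2) then H(U_1 + 2·U_2) = H(U_1 + U_2). -/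
open MeasureTheory ProbabilityTheory

/-! Write `p` for the law of `U₁`. The law of `U₁ + λ U₂` is `s ↦ ∑ₜ p (s - λ t) p t`, a mixture of
translates of `p`, so concavity of `negMulLog` gives `H(U₁ + λ U₂) ≥ H(U₁) = H(U₁ + 0 U₂)`.

For `λ = 1` against `λ = 2` write `f = negMulLog` and `a, b, c = p 0, p 1, p 2` with `b` the
median. With `s = ab + bc + ca`, `m = (a - b)(b - c)`, `σ = s + m`, `A = (b - c)²`, `C = (a - b)²`,
the required inequality reads
`f(σ + A) + f(σ + C) - f(σ + A + C) - f(σ) ≤ 2f(s) - f(s + m) - f(s - m)`.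
As `f'' = -1/x`, the left side is at most `AC/σ` and the right side at least `m²/σ`, and `m² = AC`.
If `p 1 = p 2` the laws of `U₁ + U₂` and `U₁ - U₂` agree. -/

open Real

lemma hasDerivAt_negMulLog_const_add {c x : ℝ} (h : c + x ≠ 0) :
    HasDerivAt (fun y => negMulLog (c + y)) (-log (c + x) - 1) x := by
  simpa [Function.comp_def] using (hasDerivAt_negMulLog h).comp x ((hasDerivAt_id x).const_add c)

lemma hasDerivAt_negMulLog_const_sub {c x : ℝ} (h : c - x ≠ 0) :
    HasDerivAt (fun y => negMulLog (c - y)) (log (c - x) + 1) x := by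
  refine ((hasDerivAt_negMulLog h).comp x ((hasDerivAt_id x).const_sub c)).congr_deriv ?_
  ring

lemma sq_div_le_negMulLog_central_diff {s m : ℝ} (hs : 0 < s) (hm : 0 ≤ m) (hms : m ≤ s) :
    m ^ 2 / (s + m) ≤ 2 * negMulLog s - negMulLog (s + m) - negMulLog (s - m) := by
  let G : ℝ → ℝ := fun y =>
    2 * negMulLog s - negMulLog (s + y) - negMulLog (s - y) - y ^ 2 / (s + y)
  have hG : MonotoneOn G (Set.Icc 0 s) := by
    refine monotoneOn_of_hasDerivWithinAt_nonneg (convex_Icc 0 s) ?_ (fun x hx => ?_)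
      (f' := fun x => log (s + x) + 1 - (log (s - x) + 1) - (2 * x * (s + x) - x ^ 2) / (s + x) ^ 2)
      (fun x hx => ?_)
    · refine ContinuousOn.sub (by fun_prop) (ContinuousOn.div (by fun_prop) (by fun_prop) ?_)
      intro y hy
      linarith [hy.1]
    · rw [interior_Icc] at hx
      obtain ⟨hx0, hxs⟩ := hx
      have hsq : HasDerivAt (fun y => y ^ 2 / (s + y))
          ((2 * x * (s + x) - x ^ 2) / (s + x) ^ 2) x := by
        refine ((hasDerivAt_pow 2 x).div ((hasDerivAt_id x).const_add s) ?_).congr_deriv ?_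
        · simp; linarith
        · simp
      refine ((((hasDerivAt_negMulLog_const_add (by linarith)).const_sub _).sub
        (hasDerivAt_negMulLog_const_sub (by linarith))).sub hsq).hasDerivWithinAt.congr_deriv ?_
      ring
    · rw [interior_Icc] at hx
      obtain ⟨hx0, hxs⟩ := hx
      have hlog : 2 * x / (s + x) ≤ log (s + x) - log (s - x) := by
        rw [← log_div (by linarith) (by linarith)]
        calc 2 * x / (s + x) = 1 - ((s + x) / (s - x))⁻¹ := by
              field_simp [show s - x ≠ 0 by linarith]; ring
          _ ≤ _ := one_sub_inv_le_log_of_pos (div_pos (by linarith) (by linarith))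
      have : (2 * x * (s + x) - x ^ 2) / (s + x) ^ 2 ≤ 2 * x / (s + x) := by
        rw [div_le_div_iff₀ (by positivity) (by positivity)]
        nlinarith [sq_nonneg x, sq_nonneg (s + x)]
      linarith
  have := hG ⟨le_rfl, hs.le⟩ ⟨hm, hms⟩ hm
  norm_num [G] at this
  linarith

lemma negMulLog_mixed_diff_le {σ A C : ℝ} (hσ : 0 < σ) (hA : 0 ≤ A) (hC : 0 ≤ C) :
    negMulLog (σ + A) + negMulLog (σ + C) - negMulLog (σ + A + C) - negMulLog σ ≤ A * C / σ := by
  let D : ℝ → ℝ := fun y =>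
    negMulLog (σ + y) + negMulLog (σ + C) - negMulLog (σ + C + y) - negMulLog σ - y * (C / σ)
  have hD : AntitoneOn D (Set.Ici 0) := by
    refine antitoneOn_of_hasDerivWithinAt_nonpos (convex_Ici 0) (by fun_prop) (fun x hx => ?_)
      (f' := fun x => (-log (σ + x) - 1) - (-log (σ + C + x) - 1) - C / σ) (fun x hx => ?_)
    · rw [interior_Ici] at hx
      have hx : 0 < x := hx
      exact ((((hasDerivAt_negMulLog_const_add (by positivity)).add_const _).sub
        (hasDerivAt_negMulLog_const_add (by positivity))).sub_const _ |>.sub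
        ((hasDerivAt_id x).mul_const _)).hasDerivWithinAt |>.congr_deriv (by simp)
    · rw [interior_Ici] at hx
      have hx : 0 < x := hx
      have hlog : log (σ + C + x) - log (σ + x) ≤ C / (σ + x) := by
        rw [← log_div (by positivity) (by positivity)]
        calc log ((σ + C + x) / (σ + x)) ≤ (σ + C + x) / (σ + x) - 1 :=
              log_le_sub_one_of_pos (by positivity)
          _ = C / (σ + x) := by field_simp; ring
      have : C / (σ + x) ≤ C / σ := by gcongr; linarith
      linarith
  have := hD Set.self_mem_Ici hA hA
  simp only [D, add_zero, zero_mul, sub_zero] at this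
  rw [add_right_comm, mul_div_assoc]
  linarith

lemma negMulLog_mixed_diff_le_central_diff {s m A C : ℝ} (hm : 0 ≤ m) (hms : m ≤ s)
    (hA : 0 ≤ A) (hC : 0 ≤ C) (hAC : m ^ 2 = A * C) :
    negMulLog (s + m + A) + negMulLog (s + m + C) - negMulLog (s + m + A + C) - negMulLog (s + m)
      ≤ 2 * negMulLog s - negMulLog (s + m) - negMulLog (s - m) := by
  rcases hm.eq_or_lt with rfl | hm
  · obtain rfl | rfl : A = 0 ∨ C = 0 := mul_eq_zero.mp (by rw [← hAC]; ring)
    all_goals simp only [add_zero, sub_zero]; linarith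
  · calc _ ≤ A * C / (s + m) := negMulLog_mixed_diff_le (by linarith) hA hC
      _ = m ^ 2 / (s + m) := by rw [hAC]
      _ ≤ _ := sq_div_le_negMulLog_central_diff (by linarith) hm.le hms

lemma sum_negMulLog_sq_add_two_mul_le_of_median {a b c : ℝ} (ha : 0 ≤ a) (hc : 0 ≤ c)
    (hb : 0 ≤ (a - b) * (b - c)) :
    negMulLog (a ^ 2 + 2 * b * c) + negMulLog (b ^ 2 + 2 * c * a) + negMulLog (c ^ 2 + 2 * a * b)
      ≤ negMulLog (a ^ 2 + b ^ 2 + c ^ 2) + 2 * negMulLog (a * b + b * c + c * a) := by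
  have h := negMulLog_mixed_diff_le_central_diff (s := a * b + b * c + c * a) hb
    (by nlinarith [sq_nonneg b, mul_nonneg hc ha]) (sq_nonneg (b - c)) (sq_nonneg (a - b)) (by ring)
  rw [show a * b + b * c + c * a + (a - b) * (b - c) + (b - c) ^ 2 + (a - b) ^ 2
      = a ^ 2 + b ^ 2 + c ^ 2 by ring,
    show a * b + b * c + c * a + (a - b) * (b - c) + (b - c) ^ 2 = c ^ 2 + 2 * a * b by ring,
    show a * b + b * c + c * a + (a - b) * (b - c) + (a - b) ^ 2 = a ^ 2 + 2 * b * c by ring,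
    show a * b + b * c + c * a - (a - b) * (b - c) = b ^ 2 + 2 * c * a by ring] at h
  linarith

lemma sum_negMulLog_sq_add_two_mul_le {a b c : ℝ} (ha : 0 ≤ a) (hb : 0 ≤ b) (hc : 0 ≤ c) :
    negMulLog (a ^ 2 + 2 * b * c) + negMulLog (b ^ 2 + 2 * c * a) + negMulLog (c ^ 2 + 2 * a * b)
      ≤ negMulLog (a ^ 2 + b ^ 2 + c ^ 2) + 2 * negMulLog (a * b + b * c + c * a) := by
  have median : 0 ≤ (a - b) * (b - c) ∨ 0 ≤ (b - a) * (a - c) ∨ 0 ≤ (a - c) * (c - b) := by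
    rcases le_total a b with h₁ | h₁ <;> rcases le_total b c with h₂ | h₂ <;>
      rcases le_total a c with h₃ | h₃ <;>
      first
      | exact Or.inl (by nlinarith)
      | exact Or.inr (Or.inl (by nlinarith))
      | exact Or.inr (Or.inr (by nlinarith))
  rcases median with h | h | h
  · exact sum_negMulLog_sq_add_two_mul_le_of_median ha hc h
  · have := sum_negMulLog_sq_add_two_mul_le_of_median hb hc h
    ring_nf at this ⊢
    linarith
  · have := sum_negMulLog_sq_add_two_mul_le_of_median ha hb h
    ring_nf at this ⊢
    linarith

lemma sum_negMulLog_le_sum_negMulLog_sum_translate {G ι : Type*} [AddGroup G] [Fintype G]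
    [Fintype ι] {p : G → ℝ} {w : ι → ℝ} (g : ι → G) (hp : ∀ s, 0 ≤ p s) (hw : ∀ t, 0 ≤ w t)
    (hw1 : ∑ t, w t = 1) :
    ∑ s, negMulLog (p s) ≤ ∑ s, negMulLog (∑ t, p (s - g t) * w t) := by
  have shift : ∀ t, ∑ s, negMulLog (p (s - g t)) = ∑ s, negMulLog (p s) := fun t =>
    Equiv.sum_comp (Equiv.subRight (g t)) fun s => negMulLog (p s)
  calc ∑ s, negMulLog (p s) = ∑ t, w t * ∑ s, negMulLog (p (s - g t)) := by
        simp only [shift, ← Finset.sum_mul, hw1, one_mul]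
    _ = ∑ s, ∑ t, w t * negMulLog (p (s - g t)) := by
        simp_rw [Finset.mul_sum]
        exact Finset.sum_comm
    _ ≤ ∑ s, negMulLog (∑ t, p (s - g t) * w t) := Finset.sum_le_sum fun s _ => by
        simpa [mul_comm] using concaveOn_negMulLog.le_map_sum (t := Finset.univ)
          (fun t _ => hw t) hw1 (fun t _ => Set.mem_Ici.mpr (hp (s - g t)))

section Probability

variable {Ω S : Type*} [MeasurableSpace Ω] {P : Measure Ω}
  [Fintype S] [MeasurableSpace S] [MeasurableSingletonClass S]

lemma sum_measure_preimage_singleton_eq_one [IsProbabilityMeasure P] {X : Ω → S}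
    (hX : AEMeasurable X P) : ∑ x, P (X ⁻¹' {x}) = 1 := by
  have := Measure.isProbabilityMeasure_map hX
  simp_rw [← Measure.map_apply_of_aemeasurable hX (measurableSet_singleton _)]
  rw [sum_measure_singleton, Finset.coe_univ, measure_univ]

lemma measure_preimage_add_mul_singleton [Ring S] {U₁ U₂ : Ω → S}
    (hindep : IndepFun U₁ U₂ P) (hid : IdentDistrib U₁ U₂ P P) (lam s : S) :
    P ((fun ω => U₁ ω + lam * U₂ ω) ⁻¹' {s})
      = ∑ t, P (U₁ ⁻¹' {s - lam * t}) * P (U₁ ⁻¹' {t}) := by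
  have hunion : (fun ω => U₁ ω + lam * U₂ ω) ⁻¹' {s} = ⋃ t, U₁ ⁻¹' {s - lam * t} ∩ U₂ ⁻¹' {t} := by
    ext ω
    simp [eq_sub_iff_add_eq]
  rw [hunion, measure_iUnion₀ (fun t t' h => ((pairwise_disjoint_fiber U₂ h).mono
    Set.inter_subset_right Set.inter_subset_right).aedisjoint) fun t =>
    (hid.aemeasurable_fst.nullMeasurableSet_preimage (measurableSet_singleton _)).inter
      (hid.aemeasurable_snd.nullMeasurableSet_preimage (measurableSet_singleton _)), tsum_fintype]
  refine Finset.sum_congr rfl fun t _ => ?_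
  rw [hindep.measure_inter_preimage_eq_mul _ _ (measurableSet_singleton _)
    (measurableSet_singleton _), hid.measure_mem_eq (measurableSet_singleton t)]

lemma shEnt_add_mul_eq [Ring S] [IsFiniteMeasure P] {U₁ U₂ : Ω → S}
    (hindep : IndepFun U₁ U₂ P) (hid : IdentDistrib U₁ U₂ P P) (lam : S) :
    shEnt P (fun ω => U₁ ω + lam * U₂ ω)
      = ∑ s, negMulLog (∑ t, (P (U₁ ⁻¹' {s - lam * t})).toReal * (P (U₁ ⁻¹' {t})).toReal) := by
  rw [shEnt, tsum_fintype]
  refine Finset.sum_congr rfl fun s _ => ?_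
  rw [measure_preimage_add_mul_singleton hindep hid, ENNReal.toReal_sum fun t _ =>
    ENNReal.mul_ne_top (measure_ne_top _ _) (measure_ne_top _ _)]
  simp_rw [ENNReal.toReal_mul]

end Probability

lemma ZMod.sum_univ_three {M : Type*} [AddCommMonoid M] (f : ZMod 3 → M) :
    ∑ s, f s = f 0 + f 1 + f 2 :=
  Fin.sum_univ_three f

lemma sum_negMulLog_sum_sub_zmod3 (p : ZMod 3 → ℝ) :
    ∑ s, negMulLog (∑ t, p (s - t) * p t) = negMulLog (p 0 ^ 2 + 2 * p 1 * p 2)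
      + negMulLog (p 1 ^ 2 + 2 * p 2 * p 0) + negMulLog (p 2 ^ 2 + 2 * p 0 * p 1) := by
  simp only [ZMod.sum_univ_three]
  reduce_mod_char
  ring_nf

lemma sum_negMulLog_sum_sub_two_mul_zmod3 (p : ZMod 3 → ℝ) :
    ∑ s, negMulLog (∑ t, p (s - 2 * t) * p t) = negMulLog (p 0 ^ 2 + p 1 ^ 2 + p 2 ^ 2)
      + 2 * negMulLog (p 0 * p 1 + p 1 * p 2 + p 2 * p 0) := by
  simp only [ZMod.sum_univ_three]
  reduce_mod_char
  ring_nf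

theorem two_maximizes_entropy_weighted_sum_zmod3_general
    {Ω : Type*} [MeasurableSpace Ω] (P : Measure Ω) [IsProbabilityMeasure P]
    (U₁ U₂ : Ω → ZMod 3)
    (hindep : IndepFun U₁ U₂ P) (hid : IdentDistrib U₁ U₂ P P) :
    (∀ lam : ZMod 3,
      shEnt P (fun ω => U₁ ω + lam * U₂ ω) ≤ shEnt P (fun ω => U₁ ω + 2 * U₂ ω)) ∧
    (P (U₁ ⁻¹' {1}) = P (U₁ ⁻¹' {2}) →
      shEnt P (fun ω => U₁ ω + 2 * U₂ ω) = shEnt P (fun ω => U₁ ω + U₂ ω)) := by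
  set p : ZMod 3 → ℝ := fun t => (P (U₁ ⁻¹' {t})).toReal
  have hp : ∀ t, 0 ≤ p t := fun _ => ENNReal.toReal_nonneg
  have hp1 : ∑ t, p t = 1 := by
    rw [← ENNReal.toReal_sum fun t _ => measure_ne_top P _,
      sum_measure_preimage_singleton_eq_one hid.aemeasurable_fst, ENNReal.toReal_one]
  have hent : ∀ lam : ZMod 3, shEnt P (fun ω => U₁ ω + lam * U₂ ω)
      = ∑ s, negMulLog (∑ t, p (s - lam * t) * p t) := shEnt_add_mul_eq hindep hid
  have hent_add : shEnt P (fun ω => U₁ ω + U₂ ω) = negMulLog (p 0 ^ 2 + 2 * p 1 * p 2)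
      + negMulLog (p 1 ^ 2 + 2 * p 2 * p 0) + negMulLog (p 2 ^ 2 + 2 * p 0 * p 1) := by
    simpa only [one_mul, sum_negMulLog_sum_sub_zmod3] using hent 1
  have hent_sub : shEnt P (fun ω => U₁ ω + 2 * U₂ ω) = negMulLog (p 0 ^ 2 + p 1 ^ 2 + p 2 ^ 2)
      + 2 * negMulLog (p 0 * p 1 + p 1 * p 2 + p 2 * p 0) := by
    rw [hent 2, sum_negMulLog_sum_sub_two_mul_zmod3]
  refine ⟨fun lam => ?_, fun h12 => ?_⟩
  · rcases (by decide : ∀ z : ZMod 3, z = 0 ∨ z = 1 ∨ z = 2) lam with rfl | rfl | rfl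
    · rw [hent 0, hent 2]
      simpa only [zero_mul, sub_zero, ← Finset.mul_sum, hp1, mul_one] using
        sum_negMulLog_le_sum_negMulLog_sum_translate (2 * ·) hp hp hp1
    · simpa only [one_mul, hent_add, hent_sub] using
        sum_negMulLog_sq_add_two_mul_le (hp 0) (hp 1) (hp 2)
    · exact le_rfl
  · have h12 : p 1 = p 2 := by simp only [p, h12]
    rw [hent_add, hent_sub, h12]
    ring_nf

/-- For i.i.d. random variables `U₁, U₂` with distribution `μ` on
`𝔽₃ = ℤ/3ℤ`, the coefficient `λ = 2` maximizes `H(U₁ + λ·U₂)` over `λ ∈ 𝔽₃`;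
moreover if `μ(1) = μ(2)` then `H(U₁ + 2·U₂) = H(U₁ + U₂)`. -/
theorem two_maximizes_entropy_weighted_sum_zmod3
    {Ω : Type*} [MeasurableSpace Ω] (P : Measure Ω) [IsProbabilityMeasure P]
    (U₁ U₂ : Ω → ZMod 3) (hU₁ : Measurable U₁) (hU₂ : Measurable U₂)
    (hindep : IndepFun U₁ U₂ P) (hid : IdentDistrib U₁ U₂ P P) :
    (∀ lam : ZMod 3,
      shEnt P (fun ω => U₁ ω + lam * U₂ ω) ≤ shEnt P (fun ω => U₁ ω + 2 * U₂ ω)) ∧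
    (P (U₁ ⁻¹' {1}) = P (U₁ ⁻¹' {2}) →
      shEnt P (fun ω => U₁ ω + 2 * U₂ ω) = shEnt P (fun ω => U₁ ω + U₂ ω)) :=
  two_maximizes_entropy_weighted_sum_zmod3_general P U₁ U₂ hindep hid
end

section
/- For every M > 0, there exist independent, identically distributed ℤ-valued random variables X and Y with finite Shannon entropy (indeed with finite support) such that H(X−Y) − H(X+Y) > M. -/
/-
Let `X, Y` be independent and uniform on `{0, 1, 3}`. The nine differences `a - b` take seven
values, only the diagonal `a = b` colliding, whereas `a + b = b + a` merges the off-diagonal pairs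
two by two; hence `H(X - Y) - H(X + Y) = (2 log 2 - log 3) / 3 > 0`. Reading `n` independent such
digits in base `7` multiplies the gap by `n`: digitwise sums and differences lie in windows of
width `7`, so their base-`7` value determines the digit vector, and the entropy of `n` i.i.d.
digits is `n` times that of one.
-/

open MeasureTheory ProbabilityTheory

open Finset Real

lemma negMulLog_prod {ι : Type*} [DecidableEq ι] (s : Finset ι) (x : ι → ℝ) :
    negMulLog (∏ i ∈ s, x i) = ∑ j ∈ s, ∏ i ∈ s, if i = j then negMulLog (x i) else x i := by
  induction s using Finset.induction_on with
  | empty => simp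
  | insert a s ha ih =>
    rw [prod_insert ha, negMulLog_mul, ih, sum_insert ha, prod_insert ha, if_pos rfl,
      prod_congr rfl fun i hi ↦ if_neg fun (h : i = a) ↦ ha (h ▸ hi), mul_sum]
    congr 1
    · ring
    · refine sum_congr rfl fun j hj ↦ ?_
      rw [prod_insert ha, if_neg fun (h : a = j) ↦ ha (h ▸ hj)]

lemma sum_piFinset_negMulLog_prod {ι α : Type*} [Fintype ι] [DecidableEq ι] (T : Finset α)
    (q : α → ℝ) (hq : ∑ t ∈ T, q t = 1) :
    ∑ d ∈ Fintype.piFinset (fun _ : ι ↦ T), negMulLog (∏ i, q (d i)) =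
      Fintype.card ι * ∑ t ∈ T, negMulLog (q t) := by
  calc ∑ d ∈ Fintype.piFinset (fun _ : ι ↦ T), negMulLog (∏ i, q (d i))
      = ∑ j, ∑ d ∈ Fintype.piFinset (fun _ : ι ↦ T),
          ∏ i, (fun i t ↦ if i = j then negMulLog (q t) else q t) i (d i) := by
        simp_rw [negMulLog_prod]
        exact sum_comm
    _ = ∑ j : ι, ∑ t ∈ T, negMulLog (q t) := by
        refine sum_congr rfl fun j _ ↦ ?_
        rw [sum_prod_piFinset T (fun i t ↦ if i = j then negMulLog (q t) else q t),
          Fintype.prod_eq_single j fun i hi ↦ by simp [hi, hq]]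
        simp
    _ = _ := by simp

section Entropy

variable {Ω S : Type*} [MeasurableSpace Ω]

lemma negMulLog_measure_preimage_singleton_of_notMem (P : Measure Ω) {Z : Ω → S} {s : S}
    (hs : s ∉ Set.range Z) : negMulLog (P (Z ⁻¹' {s})).toReal = 0 := by
  rw [Set.preimage_singleton_eq_empty.2 hs, measure_empty, ENNReal.toReal_zero, negMulLog_zero]

lemma shEnt_eq_sum_of_range_subset (P : Measure Ω) {Z : Ω → S} {T : Finset S}
    (hT : Set.range Z ⊆ T) : shEnt P Z = ∑ s ∈ T, negMulLog (P (Z ⁻¹' {s})).toReal :=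
  tsum_eq_sum fun _ hs ↦ negMulLog_measure_preimage_singleton_of_notMem P fun h ↦ hs (hT h)

lemma summable_negMulLog_measure_preimage_singleton (P : Measure Ω) {Z : Ω → S}
    (hZ : (Set.range Z).Finite) : Summable fun s ↦ negMulLog (P (Z ⁻¹' {s})).toReal :=
  summable_of_ne_finset_zero (s := hZ.toFinset) fun _ hs ↦
    negMulLog_measure_preimage_singleton_of_notMem P (by simpa using hs)

lemma MeasureTheory.MeasurePreserving.shEnt_comp {Ω' : Type*} [MeasurableSpace Ω']
    [MeasurableSpace S] [MeasurableSingletonClass S] {P : Measure Ω} {Q : Measure Ω'}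
    {T : Ω → Ω'} (hT : MeasurePreserving T P Q) {Z : Ω' → S} (hZ : Measurable Z) :
    shEnt P (Z ∘ T) = shEnt Q Z := by
  simp only [shEnt, Set.preimage_comp,
    hT.measure_preimage (hZ (measurableSet_singleton _)).nullMeasurableSet]

lemma shEnt_comp_of_injOn {S' : Type*} (P : Measure Ω) {Z : Ω → S} (hZ : (Set.range Z).Finite)
    {g : S → S'} (hg : Set.InjOn g (Set.range Z)) : shEnt P (g ∘ Z) = shEnt P Z := by
  classical
  have hfiber : ∀ s ∈ hZ.toFinset, (g ∘ Z) ⁻¹' {g s} = Z ⁻¹' {s} := fun s hs ↦ by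
    ext ω
    exact ⟨fun h ↦ hg (Set.mem_range_self ω) (by simpa using hs) h, fun h ↦ by simp_all⟩
  rw [shEnt_eq_sum_of_range_subset P (T := hZ.toFinset.image g) (by simp [Set.range_comp]),
    sum_image fun s hs t ht ↦ hg (by simpa using hs) (by simpa using ht),
    shEnt_eq_sum_of_range_subset P (T := hZ.toFinset) (by simp)]
  exact sum_congr rfl fun s hs ↦ by rw [hfiber s hs]

lemma shEnt_pi {ι β : Type*} [Fintype ι] [MeasurableSpace β] [MeasurableSpace S]
    [MeasurableSingletonClass S] (ν : Measure β) [IsProbabilityMeasure ν] {W : β → S}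
    (hW : Measurable W) (hWr : (Set.range W).Finite) :
    shEnt (Measure.pi fun _ : ι ↦ ν) (fun η i ↦ W (η i)) = Fintype.card ι * shEnt ν W := by
  classical
  set T := hWr.toFinset
  have hfiber (d : ι → S) : (fun η i ↦ W (η i)) ⁻¹' {d} = Set.univ.pi fun i ↦ W ⁻¹' {d i} := by
    ext η
    simp [funext_iff]
  have hq : ∑ t ∈ T, (ν (W ⁻¹' {t})).toReal = 1 := by
    rw [← ENNReal.toReal_sum fun _ _ ↦ measure_ne_top _ _,
      sum_measure_preimage_singleton T fun t _ ↦ hW (measurableSet_singleton t)]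
    simp [T]
  rw [shEnt_eq_sum_of_range_subset _ (T := Fintype.piFinset fun _ ↦ T),
    shEnt_eq_sum_of_range_subset ν (T := T) (by simp [T])]
  · simp_rw [hfiber, Measure.pi_pi, ENNReal.toReal_prod]
    exact sum_piFinset_negMulLog_prod T _ hq
  · rintro _ ⟨η, rfl⟩
    simp [T]

lemma shEnt_uniformOfFintype [Fintype Ω] [Nonempty Ω] [MeasurableSingletonClass Ω]
    [DecidableEq S] (Z : Ω → S) :
    shEnt (PMF.uniformOfFintype Ω).toMeasure Z =
      log (Fintype.card Ω) - (∑ ω, log #{ω' | Z ω' = Z ω}) / Fintype.card Ω := by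
  set N : ℝ := (Fintype.card Ω : ℝ)
  have hN : N ≠ 0 := by positivity
  have hfiber (s : S) :
      ((PMF.uniformOfFintype Ω).toMeasure (Z ⁻¹' {s})).toReal = #{ω | Z ω = s} / N := by
    classical
    rw [PMF.toMeasure_uniformOfFintype_apply _ (Set.toFinite _).measurableSet]
    simp [N, Fintype.card_subtype]
  rw [shEnt_eq_sum_of_range_subset _ (T := univ.image Z) (by simp)]
  calc ∑ s ∈ univ.image Z, negMulLog ((PMF.uniformOfFintype Ω).toMeasure (Z ⁻¹' {s})).toReal
      = ∑ s ∈ univ.image Z, ∑ ω with Z ω = s, (log N - log #{ω' | Z ω' = Z ω}) / N := by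
        refine sum_congr rfl fun s hs ↦ ?_
        have hc : (#{ω | Z ω = s} : ℝ) ≠ 0 := by
          obtain ⟨ω, -, rfl⟩ := mem_image.1 hs
          exact Nat.cast_ne_zero.2 (card_ne_zero.2 ⟨ω, by simp⟩)
        rw [sum_congr rfl fun ω hω ↦ by rw [(mem_filter.1 hω).2], sum_const, nsmul_eq_mul,
          hfiber, negMulLog, log_div hc hN]
        ring
    _ = ∑ ω, (log N - log #{ω' | Z ω' = Z ω}) / N :=
        sum_fiberwise_of_maps_to (fun ω _ ↦ mem_image_of_mem Z (mem_univ ω)) _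
    _ = log N - (∑ ω, log #{ω' | Z ω' = Z ω}) / N := by
        rw [← sum_div, sum_sub_distrib, sum_const, card_univ, nsmul_eq_mul, sub_div,
          mul_div_cancel_left₀ _ hN]

end Entropy

lemma PMF.toMeasure_uniformOfFintype_prod {α β : Type*} [Fintype α] [Fintype β] [Nonempty α]
    [Nonempty β] [MeasurableSpace α] [MeasurableSpace β] [MeasurableSingletonClass α]
    [MeasurableSingletonClass β] :
    (PMF.uniformOfFintype α).toMeasure.prod (PMF.uniformOfFintype β).toMeasure =
      (PMF.uniformOfFintype (α × β)).toMeasure := by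
  refine Measure.ext_iff_singleton.2 fun p ↦ ?_
  rw [← Set.singleton_prod_singleton, Measure.prod_prod, Set.singleton_prod_singleton]
  simp only [PMF.toMeasure_apply_singleton _ _ (measurableSet_singleton _),
    PMF.uniformOfFintype_apply, Fintype.card_prod, Nat.cast_mul]
  rw [ENNReal.mul_inv (by simp) (by simp)]

lemma identDistrib_fst_snd {α : Type*} [MeasurableSpace α] (μ : Measure α)
    [IsProbabilityMeasure μ] : IdentDistrib Prod.fst Prod.snd (μ.prod μ) (μ.prod μ) where
  aemeasurable_fst := measurable_fst.aemeasurable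
  aemeasurable_snd := measurable_snd.aemeasurable
  map_eq := by simp

def intOfDigits (b : ℤ) {n : ℕ} (d : Fin n → ℤ) : ℤ := ∑ i, d i * b ^ (i : ℕ)

lemma intOfDigits_add (b : ℤ) {n : ℕ} (d e : Fin n → ℤ) :
    intOfDigits b (d + e) = intOfDigits b d + intOfDigits b e := by
  simp only [intOfDigits, Pi.add_apply, add_mul, sum_add_distrib]

lemma intOfDigits_sub (b : ℤ) {n : ℕ} (d e : Fin n → ℤ) :
    intOfDigits b (d - e) = intOfDigits b d - intOfDigits b e := by
  simp only [intOfDigits, Pi.sub_apply, sub_mul, sum_sub_distrib]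

lemma intOfDigits_succ (b : ℤ) {n : ℕ} (d : Fin (n + 1) → ℤ) :
    intOfDigits b d = d 0 + b * intOfDigits b (Fin.tail d) := by
  simp only [intOfDigits, Fin.sum_univ_succ, Fin.val_zero, pow_zero, mul_one, Fin.val_succ,
    pow_succ, mul_sum, Fin.tail]
  congr 1
  exact sum_congr rfl fun i _ ↦ by ring

lemma eq_zero_of_intOfDigits_eq_zero {b : ℤ} {n : ℕ} {d : Fin n → ℤ} (hd : ∀ i, |d i| < b)
    (h : intOfDigits b d = 0) : d = 0 := by
  induction n with
  | zero => exact Subsingleton.elim _ _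
  | succ n ih =>
    rw [intOfDigits_succ] at h
    have hb : b ≠ 0 := ((abs_nonneg _).trans_lt (hd 0)).ne'
    have h0 : d 0 = 0 :=
      Int.eq_zero_of_abs_lt_dvd ⟨-intOfDigits b (Fin.tail d), by linarith⟩ (hd 0)
    have htail : Fin.tail d = 0 := ih (fun i ↦ hd i.succ) (by simpa [h0, hb] using h)
    ext i
    exact Fin.cases h0 (fun j ↦ congrFun htail j) i

lemma intOfDigits_injOn {b a : ℤ} {n : ℕ} :
    Set.InjOn (intOfDigits b) (Set.univ.pi fun _ : Fin n ↦ Set.Ico a (a + b)) := by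
  intro d hd e he h
  have hde (i : Fin n) : |(d - e) i| < b := by
    obtain ⟨hd₁, hd₂⟩ := hd i (Set.mem_univ i)
    obtain ⟨he₁, he₂⟩ := he i (Set.mem_univ i)
    rw [Pi.sub_apply, abs_lt]
    constructor <;> linarith
  exact sub_eq_zero.1 (eq_zero_of_intOfDigits_eq_zero hde (by rw [intOfDigits_sub, h, sub_self]))

lemma shEnt_intOfDigits_prod_pi {α β : Type*} [MeasurableSpace α] [MeasurableSpace β]
    (μ : Measure α) (ν : Measure β) [IsProbabilityMeasure μ] [IsProbabilityMeasure ν]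
    {w : α × β → ℤ} (hw : Measurable w) {a b : ℤ} (hab : ∀ p, w p ∈ Set.Ico a (a + b)) (n : ℕ) :
    shEnt ((Measure.pi fun _ : Fin n ↦ μ).prod (Measure.pi fun _ ↦ ν))
      (fun ω ↦ intOfDigits b fun i ↦ w (ω.1 i, ω.2 i)) = n * shEnt (μ.prod ν) w := by
  let D : (Fin n → α × β) → Fin n → ℤ := fun η i ↦ w (η i)
  have hD : Measurable D := measurable_pi_lambda _ fun i ↦ hw.comp (measurable_pi_apply i)
  have hrange : Set.range D ⊆ Set.univ.pi fun _ ↦ Set.Ico a (a + b) := by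
    rintro _ ⟨η, rfl⟩ i -
    exact hab (η i)
  have hcomp : (fun ω : (Fin n → α) × (Fin n → β) ↦ intOfDigits b fun i ↦ w (ω.1 i, ω.2 i)) =
      (intOfDigits b ∘ D) ∘ (MeasurableEquiv.arrowProdEquivProdArrow α β (Fin n)).symm := rfl
  rw [hcomp, (measurePreserving_arrowProdEquivProdArrow α β (Fin n) _ _).symm.shEnt_comp
      ((measurable_of_countable _).comp hD),
    shEnt_comp_of_injOn _ ((Set.Finite.pi fun _ ↦ Set.finite_Ico a (a + b)).subset hrange)
      (intOfDigits_injOn.mono hrange),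
    shEnt_pi _ hw ((Set.finite_Ico a (a + b)).subset (Set.range_subset_iff.2 hab)),
    Fintype.card_fin]

def digitValue : Fin 3 → ℤ := ![0, 1, 3]

lemma log_nine : log 9 = 2 * log 3 := by
  rw [show (9 : ℝ) = 3 ^ 2 by norm_num, log_pow, Nat.cast_ofNat]

lemma shEnt_digitValue_sub :
    shEnt (PMF.uniformOfFintype (Fin 3 × Fin 3)).toMeasure
      (fun p ↦ digitValue p.1 - digitValue p.2) = 5 / 3 * log 3 := by
  rw [shEnt_uniformOfFintype]
  simp only [card_filter]
  norm_num [Fintype.sum_prod_type, Fin.sum_univ_three, digitValue, Matrix.cons_val_two, log_nine]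
  ring

lemma shEnt_digitValue_add :
    shEnt (PMF.uniformOfFintype (Fin 3 × Fin 3)).toMeasure
      (fun p ↦ digitValue p.1 + digitValue p.2) = 2 * log 3 - 2 / 3 * log 2 := by
  rw [shEnt_uniformOfFintype]
  simp only [card_filter]
  norm_num [Fintype.sum_prod_type, Fin.sum_univ_three, digitValue, Matrix.cons_val_two, log_nine]
  ring

lemma log_three_lt_two_mul_log_two : log 3 < 2 * log 2 := by
  rw [← log_rpow two_pos]
  exact log_lt_log (by norm_num) (by norm_num)

noncomputable def digitMeasure (n : ℕ) : Measure (Fin n → Fin 3) :=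
  Measure.pi fun _ ↦ (PMF.uniformOfFintype (Fin 3)).toMeasure

instance (n : ℕ) : IsProbabilityMeasure (digitMeasure n) := by
  unfold digitMeasure
  infer_instance

def encodeDigits {n : ℕ} (x : Fin n → Fin 3) : ℤ := intOfDigits 7 (digitValue ∘ x)

lemma shEnt_sub_sub_shEnt_add_encodeDigits (n : ℕ) :
    shEnt ((digitMeasure n).prod (digitMeasure n)) (fun ω ↦ encodeDigits ω.1 - encodeDigits ω.2) -
      shEnt ((digitMeasure n).prod (digitMeasure n))
        (fun ω ↦ encodeDigits ω.1 + encodeDigits ω.2) = n * ((2 * log 2 - log 3) / 3) := by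
  have hsub := shEnt_intOfDigits_prod_pi (PMF.uniformOfFintype (Fin 3)).toMeasure
    (PMF.uniformOfFintype (Fin 3)).toMeasure (w := fun p ↦ digitValue p.1 - digitValue p.2)
    (measurable_of_countable _) (a := -3) (b := 7) (by decide) n
  have hadd := shEnt_intOfDigits_prod_pi (PMF.uniformOfFintype (Fin 3)).toMeasure
    (PMF.uniformOfFintype (Fin 3)).toMeasure (w := fun p ↦ digitValue p.1 + digitValue p.2)
    (measurable_of_countable _) (a := 0) (b := 7) (by decide) n
  rw [PMF.toMeasure_uniformOfFintype_prod, shEnt_digitValue_sub] at hsub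
  rw [PMF.toMeasure_uniformOfFintype_prod, shEnt_digitValue_add] at hadd
  calc _ = n * (5 / 3 * log 3) - n * (2 * log 3 - 2 / 3 * log 2) := by
        simp only [encodeDigits, ← intOfDigits_sub, ← intOfDigits_add]
        exact congrArg₂ (· - ·) hsub hadd
    _ = n * ((2 * log 2 - log 3) / 3) := by ring

theorem exists_iid_entropy_sub_gt_entropy_add_general (M : ℝ) :
    ∃ (Ω : Type) (_ : MeasurableSpace Ω) (P : Measure Ω) (X Y : Ω → ℤ),
      IsProbabilityMeasure P ∧ Measurable X ∧ Measurable Y ∧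
      IndepFun X Y P ∧ IdentDistrib X Y P P ∧
      (Set.range X).Finite ∧
      Summable (fun z : ℤ => Real.negMulLog (P (X ⁻¹' {z})).toReal) ∧
      shEnt P (fun ω => X ω - Y ω) - shEnt P (fun ω => X ω + Y ω) > M := by
  have hgap : 0 < (2 * log 2 - log 3) / 3 := by linarith [log_three_lt_two_mul_log_two]
  obtain ⟨n, hn⟩ := exists_nat_gt (M / ((2 * log 2 - log 3) / 3))
  have hf : Measurable (encodeDigits (n := n)) := measurable_of_countable _
  refine ⟨_, inferInstance, (digitMeasure n).prod (digitMeasure n), fun ω ↦ encodeDigits ω.1,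
    fun ω ↦ encodeDigits ω.2, inferInstance, hf.comp measurable_fst, hf.comp measurable_snd,
    indepFun_prod hf hf, (identDistrib_fst_snd _).comp hf, Set.finite_range _,
    summable_negMulLog_measure_preimage_singleton _ (Set.finite_range _), ?_⟩
  rw [shEnt_sub_sub_shEnt_add_encodeDigits]
  exact (div_lt_iff₀ hgap).1 hn

/-- Lapidoth–Pete: for every `M > 0` there exist i.i.d. `ℤ`-valued
random variables `X, Y` with finite entropy (indeed finite support) such that
`H(X-Y) - H(X+Y) > M`. -/
theorem exists_iid_entropy_sub_gt_entropy_add (M : ℝ) (hM : 0 < M) :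
    ∃ (Ω : Type) (_ : MeasurableSpace Ω) (P : Measure Ω) (X Y : Ω → ℤ),
      IsProbabilityMeasure P ∧ Measurable X ∧ Measurable Y ∧
      IndepFun X Y P ∧ IdentDistrib X Y P P ∧
      (Set.range X).Finite ∧
      Summable (fun z : ℤ => Real.negMulLog (P (X ⁻¹' {z})).toReal) ∧
      shEnt P (fun ω => X ω - Y ω) - shEnt P (fun ω => X ω + Y ω) > M :=
  exists_iid_entropy_sub_gt_entropy_add_general M
end

section
/- Let α ∈ (1, 2) and let X, Y be independent, identically distributed random variables taking values in a countable abelian group, with finite Shannon entropy and H(X) > 0. If α^{−1}·(H(X−Y) − H(X)) ≤ H(X+Y) − H(X) ≤ α·(H(X−Y) − H(X)), then (α+1)/(2α) < H(X+Y)/H(X−Y) < 2α/(α+1). -/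
open MeasureTheory ProbabilityTheory Real

lemma aux_negMulLog_tsum_le {ι : Type*} {f : ι → ℝ} (h0 : ∀ i, 0 ≤ f i)
    (hs : Summable f) (hns : Summable fun i => negMulLog (f i)) :
    negMulLog (∑' k, f k) ≤ ∑' k, negMulLog (f k) := by
  set T := ∑' k, f k with hT
  have key : negMulLog T = ∑' k, f k * (-Real.log T) := by
    rw [tsum_mul_right, ← hT, negMulLog]; ring
  rw [key]
  refine Summable.tsum_le_tsum (fun k => ?_) (hs.mul_right _) hns
  rcases eq_or_lt_of_le (h0 k) with h | h
  · simp [← h, negMulLog]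
  · have hkT : f k ≤ T := Summable.le_tsum hs k (fun m _ => h0 m)
    have : Real.log (f k) ≤ Real.log T := Real.log_le_log h hkT
    rw [negMulLog]
    nlinarith

lemma aux_negMulLog_tsum_lt {ι : Type*} [DecidableEq ι] {f : ι → ℝ} (h0 : ∀ i, 0 ≤ f i)
    (hs : Summable f) (hns : Summable fun i => negMulLog (f i))
    {i j : ι} (hij : i ≠ j) (hi : 0 < f i) (hj : 0 < f j) :
    negMulLog (∑' k, f k) < ∑' k, negMulLog (f k) := by
  set T := ∑' k, f k with hT
  have hsumij : f i + f j ≤ T := by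
    have := Summable.sum_le_tsum ({i, j} : Finset ι) (fun k _ => h0 k) hs
    rwa [Finset.sum_pair hij] at this
  have hiT : f i < T := by nlinarith
  have hT0 : 0 < T := lt_trans hi hiT
  have key : negMulLog T = ∑' k, f k * (-Real.log T) := by
    rw [tsum_mul_right, ← hT, negMulLog]; ring
  rw [key]
  refine Summable.tsum_lt_tsum (i := i) (fun k => ?_) ?_ (hs.mul_right _) hns
  · rcases eq_or_lt_of_le (h0 k) with h | h
    · simp [← h, negMulLog]
    · have hkT : f k ≤ T := Summable.le_tsum hs k (fun m _ => h0 m)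
      have : Real.log (f k) ≤ Real.log T := Real.log_le_log h hkT
      rw [negMulLog]
      nlinarith
  · have : Real.log (f i) < Real.log T := Real.log_lt_log hi hiT
    rw [negMulLog]
    nlinarith

def auxEquiv {G : Type*} (op e : G → G → G) (heop : ∀ x y, e (op x y) x = y)
    (hope : ∀ s x, op x (e s x) = s) : G × G ≃ G × G where
  toFun z := (z.2, e z.1 z.2)
  invFun z := (op z.1 z.2, z.1)
  left_inv z := by cases z; simp [hope]
  right_inv z := by cases z; simp [heop]

set_option maxHeartbeats 1000000 in
lemma shEnt_op_lt
    {Ω G : Type*} [MeasurableSpace Ω] [Countable G]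
    [MeasurableSpace G] [MeasurableSingletonClass G]
    (P : Measure Ω) [IsProbabilityMeasure P]
    (X Y : Ω → G) (hX : Measurable X) (hY : Measurable Y)
    (hindep : IndepFun X Y P) (hid : IdentDistrib X Y P P)
    (hfinEnt : Summable fun g : G => Real.negMulLog (P (X ⁻¹' {g})).toReal)
    (hpos : 0 < shEnt P X)
    (op e : G → G → G)
    (he : ∀ s x y, op x y = s ↔ y = e s x)
    (hpair : ∀ x₀ x₁ : G, x₀ ≠ x₁ →
      ∃ s, (e s x₀ = x₀ ∨ e s x₀ = x₁) ∧ (e s x₁ = x₀ ∨ e s x₁ = x₁)) :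
    shEnt P (fun ω => op (X ω) (Y ω)) < 2 * shEnt P X := by
  classical
  set p : G → ℝ := fun g => (P (X ⁻¹' {g})).toReal with hp
  have hYX : ∀ g : G, P (Y ⁻¹' {g}) = P (X ⁻¹' {g}) :=
    fun g => (hid.measure_mem_eq (measurableSet_singleton g)).symm
  have hmero : ∀ g : G, P (X ⁻¹' {g}) ≠ ⊤ := fun g => measure_ne_top P _
  have hptsum : ∑' g : G, P (X ⁻¹' {g}) = 1 := by
    have hd : Pairwise (Function.onFun Disjoint fun g : G => X ⁻¹' {g}) := by
      intro g g' hgg'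
      simp only [Function.onFun, Set.disjoint_left, Set.mem_preimage, Set.mem_singleton_iff]
      intro ω h1 h2
      exact hgg' (h1 ▸ h2 ▸ rfl)
    rw [← measure_iUnion hd (fun g => hX (measurableSet_singleton g))]
    have hU : (⋃ g : G, X ⁻¹' {g}) = Set.univ := by ext ω; simp
    rw [hU, measure_univ]
  have hpsummable : Summable p :=
    ENNReal.summable_toReal (by rw [hptsum]; exact ENNReal.one_ne_top)
  have hpsum1 : ∑' g : G, p g = 1 := by
    have h := ENNReal.tsum_toReal_eq hmero
    rw [hptsum] at h
    simpa using h.symm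
  have hp0 : ∀ g, 0 ≤ p g := fun g => ENNReal.toReal_nonneg
  have hp1 : ∀ g, p g ≤ 1 := fun g => by
    simpa using ENNReal.toReal_mono ENNReal.one_ne_top (prob_le_one (μ := P) (s := X ⁻¹' {g}))
  have hnml0 : ∀ g, 0 ≤ negMulLog (p g) := fun g => negMulLog_nonneg (hp0 g) (hp1 g)
  -- fiber decomposition of the distribution of op(X,Y)
  have heop : ∀ x y, e (op x y) x = y := fun x y => ((he (op x y) x y).1 rfl).symm
  have hope : ∀ s x, op x (e s x) = s := fun s x => (he s x (e s x)).2 rfl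
  have hPZ : ∀ s : G, P ((fun ω => op (X ω) (Y ω)) ⁻¹' {s})
      = ∑' x : G, P (X ⁻¹' {x}) * P (X ⁻¹' {e s x}) := by
    intro s
    have hfiber : ((fun ω => op (X ω) (Y ω)) ⁻¹' {s})
        = ⋃ x : G, (X ⁻¹' {x} ∩ Y ⁻¹' {e s x}) := by
      ext ω
      simp only [Set.mem_preimage, Set.mem_singleton_iff, Set.mem_iUnion, Set.mem_inter_iff]
      constructor
      · intro h; exact ⟨X ω, rfl, (he s (X ω) (Y ω)).1 h⟩
      · rintro ⟨x, hx, hy⟩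
        rw [← hx] at hy
        exact (he s (X ω) (Y ω)).2 hy
    have hd : Pairwise (Function.onFun Disjoint fun x : G => X ⁻¹' {x} ∩ Y ⁻¹' {e s x}) := by
      intro g g' hgg'
      simp only [Function.onFun, Set.disjoint_left, Set.mem_inter_iff, Set.mem_preimage,
        Set.mem_singleton_iff]
      rintro ω ⟨h1, _⟩ ⟨h2, _⟩
      exact hgg' (h1 ▸ h2 ▸ rfl)
    rw [hfiber, measure_iUnion hd (fun x =>
      (hX (measurableSet_singleton x)).inter (hY (measurableSet_singleton _)))]
    exact tsum_congr fun x => by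
      rw [hindep.measure_inter_preimage_eq_mul _ _ (measurableSet_singleton x)
        (measurableSet_singleton _), hYX]
  have hqs : ∀ s : G, (P ((fun ω => op (X ω) (Y ω)) ⁻¹' {s})).toReal
      = ∑' x : G, p x * p (e s x) := by
    intro s
    rw [hPZ s, ENNReal.tsum_toReal_eq (fun x => ENNReal.mul_ne_top (hmero x) (hmero _))]
    exact tsum_congr fun x => ENNReal.toReal_mul
  have hfs : ∀ s : G, Summable (fun x : G => p x * p (e s x)) := by
    intro s
    have h1 : (∑' x : G, P (X ⁻¹' {x}) * P (X ⁻¹' {e s x})) ≠ ⊤ := by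
      rw [← hPZ s]; exact measure_ne_top P _
    have := ENNReal.summable_toReal h1
    simpa [ENNReal.toReal_mul] using this
  have hq1 : ∀ s : G, (∑' x : G, p x * p (e s x)) ≤ 1 := by
    intro s
    rw [← hqs s]
    simpa using ENNReal.toReal_mono ENNReal.one_ne_top (prob_le_one (μ := P))
  have hq0 : ∀ s : G, 0 ≤ ∑' x : G, p x * p (e s x) := fun s =>
    tsum_nonneg fun x => mul_nonneg (hp0 x) (hp0 _)
  -- summability of the doubly-indexed entropy terms
  have hF1 : Summable (fun z : G × G => p z.1 * negMulLog (p z.2)) :=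
    hpsummable.mul_of_nonneg hfinEnt hp0 hnml0
  have hF2 : Summable (fun z : G × G => negMulLog (p z.1) * p z.2) :=
    hfinEnt.mul_of_nonneg hpsummable hnml0 hp0
  have hFexp : (fun z : G × G => negMulLog (p z.1 * p z.2))
      = fun z : G × G => negMulLog (p z.1) * p z.2 + p z.1 * negMulLog (p z.2) := by
    funext z; rw [negMulLog_mul]; ring
  have hFS : Summable (fun z : G × G => negMulLog (p z.1 * p z.2)) := by
    rw [hFexp]; exact hF2.add hF1
  have hsh : shEnt P X = ∑' g : G, negMulLog (p g) := rfl
  have hmul1 : (∑' b : G, negMulLog (p b)) * (∑' c : G, p c)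
      = ∑' z : G × G, negMulLog (p z.1) * p z.2 :=
    tsum_mul_tsum_of_summable_norm (summable_norm_iff.mpr hfinEnt)
      (summable_norm_iff.mpr hpsummable)
  have hmul2 : (∑' b : G, p b) * (∑' c : G, negMulLog (p c))
      = ∑' z : G × G, p z.1 * negMulLog (p z.2) :=
    tsum_mul_tsum_of_summable_norm (summable_norm_iff.mpr hpsummable)
      (summable_norm_iff.mpr hfinEnt)
  have hFsum : ∑' z : G × G, negMulLog (p z.1 * p z.2) = 2 * shEnt P X := by
    rw [hFexp, Summable.tsum_add hF2 hF1, ← hmul1, ← hmul2, hpsum1, hsh]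
    ring
  have hFE : Summable (fun z : G × G => negMulLog (p z.2 * p (e z.1 z.2))) := by
    have h := hFS.comp_injective (auxEquiv op e heop hope).injective
    simpa [auxEquiv, Function.comp_def] using h
  have hnnFE : 0 ≤ fun z : G × G => negMulLog (p z.2 * p (e z.1 z.2)) := fun z =>
    negMulLog_nonneg (mul_nonneg (hp0 _) (hp0 _))
      (mul_le_one₀ (hp1 _) (hp0 _) (hp1 _))
  obtain ⟨hslice, hmarg⟩ := (summable_prod_of_nonneg hnnFE).1 hFE
  have h2 : ∃ x₀ x₁ : G, x₀ ≠ x₁ ∧ 0 < p x₀ ∧ 0 < p x₁ := by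
    have hex : ∃ x, 0 < p x := by
      by_contra hno
      push_neg at hno
      have hz : ∀ x, p x = 0 := fun x => le_antisymm (hno x) (hp0 x)
      rw [tsum_congr hz] at hpsum1
      simp at hpsum1
    obtain ⟨x₀, hx₀⟩ := hex
    by_contra hcon
    push_neg at hcon
    have hz : ∀ x, x ≠ x₀ → p x = 0 := by
      intro x hx
      rcases lt_or_eq_of_le (hp0 x) with h | h
      · exact absurd hx₀ (not_lt.2 (hcon x x₀ hx h))
      · exact h.symm
    have hpx1 : p x₀ = 1 := by
      rw [← hpsum1, tsum_eq_single x₀ (fun b hb => hz b hb)]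
    have : shEnt P X = 0 := by
      rw [hsh, tsum_eq_single x₀ (fun b hb => by rw [hz b hb]; simp [negMulLog]), hpx1]
      simp [negMulLog]
    linarith
  obtain ⟨x₀, x₁, hne, hpx₀, hpx₁⟩ := h2
  obtain ⟨s₀, hs₀, hs₁⟩ := hpair x₀ x₁ hne
  have hfx₀ : 0 < p x₀ * p (e s₀ x₀) :=
    mul_pos hpx₀ (by rcases hs₀ with h | h <;> rw [h] <;> assumption)
  have hfx₁ : 0 < p x₁ * p (e s₀ x₁) :=
    mul_pos hpx₁ (by rcases hs₁ with h | h <;> rw [h] <;> assumption)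
  have hle : ∀ s : G, negMulLog (∑' x : G, p x * p (e s x))
      ≤ ∑' x : G, negMulLog (p x * p (e s x)) := fun s =>
    aux_negMulLog_tsum_le (fun x => mul_nonneg (hp0 x) (hp0 _)) (hfs s) (hslice s)
  have hstrict : negMulLog (∑' x : G, p x * p (e s₀ x))
      < ∑' x : G, negMulLog (p x * p (e s₀ x)) :=
    aux_negMulLog_tsum_lt (fun x => mul_nonneg (hp0 x) (hp0 _)) (hfs s₀) (hslice s₀)
      hne hfx₀ hfx₁
  have hgsum : Summable (fun s : G => negMulLog (∑' x : G, p x * p (e s x))) :=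
    Summable.of_nonneg_of_le (fun s => negMulLog_nonneg (hq0 s) (hq1 s)) hle hmarg
  have hZdef : shEnt P (fun ω => op (X ω) (Y ω))
      = ∑' s : G, negMulLog (∑' x : G, p x * p (e s x)) :=
    tsum_congr fun s => by rw [hqs s]
  rw [hZdef]
  calc ∑' s : G, negMulLog (∑' x : G, p x * p (e s x))
      < ∑' s : G, ∑' x : G, negMulLog (p x * p (e s x)) :=
        Summable.tsum_lt_tsum hle hstrict hgsum hmarg
    _ = ∑' z : G × G, negMulLog (p z.2 * p (e z.1 z.2)) :=
        (Summable.tsum_prod' hFE hslice).symm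
    _ = ∑' z : G × G, negMulLog (p z.1 * p z.2) := by
        rw [← Equiv.tsum_eq (auxEquiv op e heop hope)
          (fun z : G × G => negMulLog (p z.1 * p z.2))]
        exact tsum_congr fun z => by simp [auxEquiv]
    _ = 2 * shEnt P X := hFsum

/-- for `α ∈ (1,2)` and i.i.d. random variables `X, Y` taking
values in a countable abelian group, with finite entropy and `H(X) > 0`, if
`α⁻¹·(H(X-Y) - H(X)) ≤ H(X+Y) - H(X) ≤ α·(H(X-Y) - H(X))`, then
`(α+1)/(2α) < H(X+Y)/H(X-Y) < 2α/(α+1)`. -/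
theorem entropy_ratio_bounds_of_alpha
    {Ω G : Type*} [MeasurableSpace Ω] [AddCommGroup G] [Countable G]
    [MeasurableSpace G] [MeasurableSingletonClass G]
    (P : Measure Ω) [IsProbabilityMeasure P]
    (α : ℝ) (hα : 1 < α ∧ α < 2)
    (X Y : Ω → G) (hX : Measurable X) (hY : Measurable Y)
    (hindep : IndepFun X Y P) (hid : IdentDistrib X Y P P)
    (hfinEnt : Summable fun g : G => Real.negMulLog (P (X ⁻¹' {g})).toReal)
    (hpos : 0 < shEnt P X)
    (hlow : α⁻¹ * (shEnt P (fun ω => X ω - Y ω) - shEnt P X)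
      ≤ shEnt P (fun ω => X ω + Y ω) - shEnt P X)
    (hhigh : shEnt P (fun ω => X ω + Y ω) - shEnt P X
      ≤ α * (shEnt P (fun ω => X ω - Y ω) - shEnt P X)) :
    (α + 1) / (2 * α) < shEnt P (fun ω => X ω + Y ω) / shEnt P (fun ω => X ω - Y ω) ∧
    shEnt P (fun ω => X ω + Y ω) / shEnt P (fun ω => X ω - Y ω) < 2 * α / (α + 1) := by
  obtain ⟨hα1, hα2⟩ := hα
  have hα0 : (0:ℝ) < α := by linarith
  set h := shEnt P X with hh
  set a := shEnt P (fun ω => X ω + Y ω) with ha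
  set b := shEnt P (fun ω => X ω - Y ω) with hb
  have hsum_lt : a < 2 * h := by
    rw [ha, hh]
    exact shEnt_op_lt P X Y hX hY hindep hid hfinEnt hpos
      (fun x y => x + y) (fun s x => s - x)
      (fun s x y => by
        constructor
        · rintro rfl; exact (add_sub_cancel_left x y).symm
        · rintro rfl; show x + (s - x) = s; rw [add_comm]; exact sub_add_cancel s x)
      (fun x₀ x₁ _ => ⟨x₀ + x₁, Or.inr (add_sub_cancel_left x₀ x₁),
        Or.inl (add_sub_cancel_right x₀ x₁)⟩)
  have hdiff_lt : b < 2 * h := by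
    rw [hb, hh]
    exact shEnt_op_lt P X Y hX hY hindep hid hfinEnt hpos
      (fun x y => x - y) (fun s x => x - s)
      (fun s x y => by
        constructor
        · rintro rfl; exact (sub_sub_cancel x y).symm
        · rintro rfl; exact sub_sub_cancel x s)
      (fun x₀ x₁ _ => ⟨0, Or.inl (sub_zero x₀), Or.inr (sub_zero x₁)⟩)
  have hlow' : b - h ≤ α * (a - h) := by
    have := mul_le_mul_of_nonneg_left hlow (le_of_lt hα0)
    rwa [← mul_assoc, mul_inv_cancel₀ (ne_of_gt hα0), one_mul] at this
  have hb0 : 0 ≤ b - h := by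
    by_contra hneg
    push_neg at hneg
    have h3 : b - h ≤ α * (α * (b - h)) :=
      le_trans hlow' (mul_le_mul_of_nonneg_left hhigh hα0.le)
    nlinarith [mul_pos (mul_pos (show (0:ℝ) < α - 1 by linarith)
      (show (0:ℝ) < α + 1 by linarith)) (show (0:ℝ) < h - b by linarith)]
  have ha0 : 0 ≤ a - h := by
    have := mul_nonneg (inv_nonneg.2 hα0.le) hb0
    linarith
  have hbpos : 0 < b := by linarith
  constructor
  · rw [div_lt_div_iff₀ (by linarith) hbpos]
    nlinarith [mul_pos (show (0:ℝ) < α - 1 by linarith) (show (0:ℝ) < 2*h - b by linarith)]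
  · rw [div_lt_div_iff₀ hbpos (by linarith)]
    nlinarith [mul_pos (show (0:ℝ) < α - 1 by linarith) (show (0:ℝ) < 2*h - a by linarith)]
end
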